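/- Let E be a real inner product space, d : E → ℝ differentiable at x with gradient n(x) satisfying ‖n(x)‖ = 1, and ψ : ℝ → ℝ differentiable at d(x) with ψ(d(x))·ψ'(d(x)) > 0. Set g = 2·ψ(d(x))·ψ'(d(x))·n(x). Then there exists ε > 0 such that for every step size η with 0 < η < ε, the gradient-descent update satisfies d(x − η·g) < d(x). In other words, one gradient descent step on the flow regularizer L_flow(x) = ψ(d(x))² with sufficiently small step size strictly decreases the distance of the reconstruction to the data manifold. -/

import Mathlib

/-!
The step `-g` is a descent direction for `d`: `g` is a positive multiple of the unit gradient
`n x`, so the derivative of `η ↦ d (x - η • g)` at `0` is `-⟪n x, g⟫ = -2 ψ(d x) ψ' < 0`, and a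
real function with negative derivative at a point drops below its value just to the right of it.
-/

open Filter Topology InnerProductSpace

theorem HasDerivAt.eventually_right_lt_of_neg {f : ℝ → ℝ} {f' a : ℝ} (hf : HasDerivAt f f' a)
    (hf' : f' < 0) : ∀ᶠ t in 𝓝[>] (0 : ℝ), f (a + t) < f a := by
  filter_upwards [hf.tendsto_slope_zero_right.eventually (eventually_lt_nhds hf'),
    self_mem_nhdsWithin] with t hslope (ht : 0 < t)
  exact sub_neg.mp ((smul_neg_iff_of_pos_left (inv_pos.mpr ht)).mp hslope)

section Gradient

variable {E : Type*} [NormedAddCommGroup E] [InnerProductSpace ℝ E] [CompleteSpace E]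
  {f : E → ℝ} {f' x : E}

theorem HasGradientAt.hasDerivAt_comp_sub_smul (hf : HasGradientAt f f' x) (v : E) :
    HasDerivAt (fun η : ℝ ↦ f (x - η • v)) (-⟪f', v⟫_ℝ) 0 := by
  have hline : HasDerivAt (fun η : ℝ ↦ x - η • v) (-v) 0 := by
    simpa using ((hasDerivAt_id (0 : ℝ)).smul_const v).const_sub x
  have hfx : HasFDerivAt f (toDual ℝ E f') (x - (0 : ℝ) • v) := by simpa using hf.hasFDerivAt
  exact (hfx.comp_hasDerivAt 0 hline).congr_deriv (by simp)

theorem HasGradientAt.eventually_lt_sub_smul {v : E} (hf : HasGradientAt f f' x)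
    (hv : 0 < ⟪f', v⟫_ℝ) : ∀ᶠ η in 𝓝[>] (0 : ℝ), f (x - η • v) < f x := by
  simpa using (hf.hasDerivAt_comp_sub_smul v).eventually_right_lt_of_neg (neg_neg_of_pos hv)

end Gradient

theorem flow_descent_decreases_distance_general
    {E : Type*} [NormedAddCommGroup E] [InnerProductSpace ℝ E] [CompleteSpace E]
    (d : E → ℝ) (ψ : ℝ → ℝ) (ψ' : ℝ) (x : E) (n : E → E)
    (hd : HasGradientAt d (n x) x) (hn : ‖n x‖ = 1)
    (hpos : 0 < ψ (d x) * ψ')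
    (g : E) (hg : g = (2 * ψ (d x) * ψ') • n x) :
    ∃ ε > 0, ∀ η : ℝ, 0 < η → η < ε → d (x - η • g) < d x := by
  have hdescent : 0 < ⟪n x, g⟫_ℝ := by
    rw [hg, real_inner_smul_right, real_inner_self_eq_norm_sq, hn]
    linarith
  obtain ⟨ε, hε, hsmall⟩ :=
    mem_nhdsGT_iff_exists_Ioo_subset.mp (hd.eventually_lt_sub_smul hdescent)
  exact ⟨ε, hε, fun η hη hηε ↦ hsmall ⟨hη, hηε⟩⟩

/-- One gradient-descent step on the flow regularizer `L_flow(x) = ψ(d(x))²`, with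
gradient `g = 2 ψ(d(x)) ψ'(d(x)) • n(x)` and sufficiently small step size `η`,
strictly decreases the distance `d` of the reconstruction to the data manifold. -/
theorem flow_descent_decreases_distance
    {E : Type*} [NormedAddCommGroup E] [InnerProductSpace ℝ E] [CompleteSpace E]
    (d : E → ℝ) (ψ : ℝ → ℝ) (ψ' : ℝ) (x : E) (n : E → E)
    (hd : HasGradientAt d (n x) x) (hn : ‖n x‖ = 1)
    (hψ : HasDerivAt ψ ψ' (d x))
    (hpos : 0 < ψ (d x) * ψ')
    (g : E) (hg : g = (2 * ψ (d x) * ψ') • n x) :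
    ∃ ε > 0, ∀ η : ℝ, 0 < η → η < ε → d (x - η • g) < d x :=
  flow_descent_decreases_distance_general d ψ ψ' x n hd hn hpos g hg
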